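/- arXiv:1504.04201 — 3 statements merged into one kernel-verified Lean document; each statement's English description precedes it below -/
import Mathlib

section
/- Let m ≥ n−2 and let f = x_0^{a_0} x_1^{a_1} ⋯ x_{n+1}^{a_{n+1}} be a monomial with f ∈ I_{B_n}^{(m)}. Define g = x_0^{b_0} x_1^{b_1} ⋯ x_{n+1}^{b_{n+1}} where b_0 = a_0, b_{n+1} = a_{n+1}, and b_i = max{a_i − 1, 0} for i = 1, …, n. Then g ∈ I_{B_n}^{(m−(n−2))}. -/
open MvPolynomial
open Fin.NatCast

/-- The subtree (arc) of `n-2` consecutive cycle vertices of the `n`-cycle `Q_n`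
(on vertices `1,…,n` inside `Fin (n+2)`), starting at vertex `i+1`, for `i = 0,…,n-1`.
The family `arcT n i`, `i < n`, is exactly the family `𝒯` of subtrees of `Q_n`
with `n-2` vertices. -/
def arcT (n i : ℕ) : Finset (Fin (n + 2)) :=
  (Finset.range (n - 2)).image fun t => (((i + t) % n + 1 : ℕ) : Fin (n + 2))

/-- The monomial prime ideal `⟨x_v⟩ + ⟨x_j : j ∈ S⟩`. -/
noncomputable def apexIdeal (K : Type*) [Field K] (n : ℕ) (v : Fin (n + 2))
    (S : Finset (Fin (n + 2))) : Ideal (MvPolynomial (Fin (n + 2)) K) :=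
  Ideal.span (insert (X v) (X '' (S : Set (Fin (n+2))) : Set (MvPolynomial (Fin (n + 2)) K)))

/-- The `m`-th symbolic power `I_{B_n}^{(m)} = ⋂_{S ∈ 𝒯} (I_{[0,S]}^m ∩ I_{[n+1,S]}^m)`. -/
noncomputable def symbPow (K : Type*) [Field K] (n m : ℕ) : Ideal (MvPolynomial (Fin (n + 2)) K) :=
  ⨅ i ∈ Finset.range n,
    apexIdeal K n 0 (arcT n i) ^ m ⊓ apexIdeal K n ((n + 1 : ℕ) : Fin (n + 2)) (arcT n i) ^ m

/-- The monomial `x_0^{a_0} x_1^{a_1} ⋯ x_{n+1}^{a_{n+1}}`. -/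
noncomputable def monom (K : Type*) [Field K] (n : ℕ) (a : Fin (n + 2) → ℕ) :
    MvPolynomial (Fin (n + 2)) K :=
  ∏ i, X i ^ a i

/-- `α_{n,m}`: the least total degree of a monomial lying in `I_{B_n}^{(m)}`. -/
noncomputable def alphaSymb (K : Type*) [Field K] (n m : ℕ) : ℕ :=
  sInf {d | ∃ a : Fin (n + 2) → ℕ, (∑ i, a i) = d ∧ monom K n a ∈ symbPow K n m}

/-- The Stanley–Reisner ideal `I_{B_n}` of the bipyramid `B_n`, presented by its
quadratic generators: `x_0 x_{n+1}` together with `x_i x_j` for non-adjacent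
vertices `i, j` of the cycle `Q_n`. -/
noncomputable def bipyrIdeal (K : Type*) [Field K] (n : ℕ) : Ideal (MvPolynomial (Fin (n + 2)) K) :=
  Ideal.span ({X (0 : Fin (n + 2)) * X ((n + 1 : ℕ) : Fin (n + 2))} ∪
    {p | ∃ i j : ℕ, 1 ≤ i ∧ i ≤ n ∧ 1 ≤ j ∧ j ≤ n ∧ i ≠ j ∧
      j ≠ i % n + 1 ∧ i ≠ j % n + 1 ∧
      p = X ((i : ℕ) : Fin (n + 2)) * X ((j : ℕ) : Fin (n + 2))})

/-!
A monomial `x^a` lies in the `m`-th power of the monomial prime `⟨x_j : j ∈ T⟩` iff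
`∑_{j ∈ T} a_j ≥ m`. Each prime `I_{[v,S]}` of the intersection is generated by an apex variable
`x_v`, whose exponent is not lowered, and the `n - 2` variables of the arc `S`, whose exponents
drop by at most one; so the order of the monomial along each of these primes drops by at most
`n - 2`.
-/

section MonomialIdeal

variable {σ K : Type*} [Fintype σ]

theorem prod_X_pow_mem_span_X_image_pow_of_le [CommSemiring K] {T : Finset σ} {a : σ → ℕ}
    {m : ℕ} (h : m ≤ ∑ j ∈ T, a j) :
    (∏ i, (X i : MvPolynomial σ K) ^ a i) ∈ Ideal.span (X '' (T : Set σ)) ^ m := by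
  classical
  have hT : (∏ i ∈ T, (X i : MvPolynomial σ K) ^ a i) ∈ Ideal.span (X '' (T : Set σ)) ^ m := by
    refine Ideal.pow_le_pow_right h ?_
    rw [← Finset.prod_pow_eq_pow_sum]
    exact Ideal.prod_mem_prod fun j hj =>
      Ideal.pow_mem_pow (Ideal.subset_span (Set.mem_image_of_mem X hj)) _
  rw [← Finset.prod_mul_prod_compl T]
  exact Ideal.mul_mem_right _ _ hT

/-- Substituting `X` for the variables in `T` and `1` for the others turns the question into
one about powers of `X` in `K[X]`. -/
theorem le_sum_of_prod_X_pow_mem_span_X_image_pow [CommRing K] [IsDomain K] {T : Finset σ}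
    {a : σ → ℕ} {m : ℕ}
    (h : (∏ i, (X i : MvPolynomial σ K) ^ a i) ∈ Ideal.span (X '' (T : Set σ)) ^ m) :
    m ≤ ∑ j ∈ T, a j := by
  classical
  let φ : MvPolynomial σ K →ₐ[K] Polynomial K :=
    aeval fun j => if j ∈ T then Polynomial.X else 1
  have hspan : (Ideal.span (X '' (T : Set σ))).map φ ≤ Ideal.span {Polynomial.X} := by
    rw [Ideal.map_span, Ideal.span_le]
    rintro _ ⟨_, ⟨j, hj, rfl⟩, rfl⟩
    simp only [φ, aeval_X, if_pos (Finset.mem_coe.mp hj)]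
    exact Ideal.mem_span_singleton_self _
  have hφ : φ (∏ i, X i ^ a i) = Polynomial.X ^ ∑ j ∈ T, a j := by
    simp [φ, map_prod, ite_pow, Finset.prod_ite_mem, Finset.prod_pow_eq_pow_sum]
  have hmem : Polynomial.X ^ ∑ j ∈ T, a j ∈ Ideal.span {(Polynomial.X : Polynomial K) ^ m} := by
    rw [← hφ, ← Ideal.span_singleton_pow]
    exact Ideal.pow_right_mono hspan m (Ideal.map_pow φ _ m ▸ Ideal.mem_map_of_mem φ h)
  rwa [Ideal.mem_span_singleton, pow_dvd_pow_iff Polynomial.X_ne_zero Polynomial.not_isUnit_X]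
    at hmem

theorem prod_X_pow_mem_span_X_image_pow_iff [CommRing K] [IsDomain K] (T : Finset σ)
    (a : σ → ℕ) (m : ℕ) :
    (∏ i, (X i : MvPolynomial σ K) ^ a i) ∈ Ideal.span (X '' (T : Set σ)) ^ m ↔
      m ≤ ∑ j ∈ T, a j :=
  ⟨le_sum_of_prod_X_pow_mem_span_X_image_pow, prod_X_pow_mem_span_X_image_pow_of_le⟩

theorem prod_X_pow_mem_span_insert_pow_tsub_card [CommRing K] [IsDomain K] [DecidableEq σ]
    {v : σ} {S : Finset σ} (hv : v ∉ S) {a b : σ → ℕ} (hav : a v ≤ b v)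
    (haS : ∀ j ∈ S, a j ≤ b j + 1) {m : ℕ} (h : (∏ i, (X i : MvPolynomial σ K) ^ a i) ∈
      Ideal.span (X '' ((insert v S : Finset σ) : Set σ)) ^ m) :
    (∏ i, (X i : MvPolynomial σ K) ^ b i) ∈
      Ideal.span (X '' ((insert v S : Finset σ) : Set σ)) ^ (m - S.card) := by
  rw [prod_X_pow_mem_span_X_image_pow_iff, Finset.sum_insert hv] at h ⊢
  have hS : ∑ j ∈ S, a j ≤ ∑ j ∈ S, b j + S.card := by
    simpa [Finset.sum_add_distrib] using Finset.sum_le_sum haS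
  omega

end MonomialIdeal

theorem apexIdeal_eq_span (K : Type*) [Field K] (n : ℕ) (v : Fin (n + 2))
    (S : Finset (Fin (n + 2))) :
    apexIdeal K n v S = Ideal.span (X '' ((insert v S : Finset (Fin (n + 2))) : Set _)) := by
  rw [apexIdeal, Finset.coe_insert, Set.image_insert_eq]

theorem card_arcT_le (n i : ℕ) : (arcT n i).card ≤ n - 2 :=
  Finset.card_image_le.trans (Finset.card_range _).le

theorem val_mem_Icc_of_mem_arcT {n i : ℕ} {j : Fin (n + 2)} (hj : j ∈ arcT n i) :
    j.val ∈ Set.Icc 1 n := by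
  obtain ⟨t, ht, rfl⟩ := Finset.mem_image.mp hj
  have hlt : (i + t) % n < n := Nat.mod_lt _ (by rw [Finset.mem_range] at ht; omega)
  rw [Fin.val_natCast, Nat.mod_eq_of_lt (by omega)]
  exact ⟨by omega, hlt⟩

theorem apex_notMem_arcT {n : ℕ} (i : ℕ) {v : Fin (n + 2)}
    (hv : v = 0 ∨ v = ((n + 1 : ℕ) : Fin (n + 2))) : v ∉ arcT n i := by
  intro hmem
  have hval := val_mem_Icc_of_mem_arcT hmem
  rcases hv with rfl | rfl
  · exact absurd hval.1 (by simp)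
  · rw [Fin.val_natCast, Nat.mod_eq_of_lt (by omega)] at hval
    exact absurd hval.2 (by omega)

theorem lowered_monom_mem_apexIdeal_pow {K : Type*} [Field K] {n m : ℕ} {v : Fin (n + 2)}
    (hv : v = 0 ∨ v = ((n + 1 : ℕ) : Fin (n + 2))) (i : ℕ) {a : Fin (n + 2) → ℕ}
    (h : monom K n a ∈ apexIdeal K n v (arcT n i) ^ m) :
    monom K n (fun j => if j = 0 ∨ j = ((n + 1 : ℕ) : Fin (n + 2)) then a j else a j - 1)
      ∈ apexIdeal K n v (arcT n i) ^ (m - (n - 2)) := by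
  rw [apexIdeal_eq_span] at h ⊢
  refine Ideal.pow_le_pow_right (Nat.sub_le_sub_left (card_arcT_le n i) m) ?_
  exact prod_X_pow_mem_span_insert_pow_tsub_card (apex_notMem_arcT i hv) (if_pos hv).ge
    (fun j _ => by split_ifs <;> omega) h

theorem lowered_monom_mem_symbPow_general (K : Type*) [Field K] (n : ℕ) (m : ℕ)
    (a : Fin (n + 2) → ℕ) (hf : monom K n a ∈ symbPow K n m) :
    monom K n (fun j => if j = 0 ∨ j = ((n + 1 : ℕ) : Fin (n + 2)) then a j else a j - 1)
      ∈ symbPow K n (m - (n - 2)) := by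
  simp only [symbPow, Ideal.mem_iInf, Ideal.mem_inf] at hf ⊢
  exact fun i hi => ⟨lowered_monom_mem_apexIdeal_pow (.inl rfl) i (hf i hi).1,
    lowered_monom_mem_apexIdeal_pow (.inr rfl) i (hf i hi).2⟩

/-- If `m ≥ n - 2` and `f = x_0^{a_0} ⋯ x_{n+1}^{a_{n+1}} ∈ I_{B_n}^{(m)}`, then the
monomial `g` obtained by lowering each cycle exponent `a_i` (`i = 1,…,n`) to
`max {a_i - 1, 0}`, keeping `a_0` and `a_{n+1}`, lies in `I_{B_n}^{(m-(n-2))}`. -/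
theorem lowered_monom_mem_symbPow (K : Type*) [Field K] (n : ℕ) (hn : 3 ≤ n) (m : ℕ)
    (hm : n - 2 ≤ m) (a : Fin (n + 2) → ℕ) (hf : monom K n a ∈ symbPow K n m) :
    monom K n (fun j => if j = 0 ∨ j = ((n + 1 : ℕ) : Fin (n + 2)) then a j else a j - 1)
      ∈ symbPow K n (m - (n - 2)) :=
  lowered_monom_mem_symbPow_general K n m a hf
end

section
/- Let k ≥ 2 and n = 2k. For every integer s ≥ 1, α_{2k, s(k−1)} = sk; that is, the least total degree of a monomial belonging to I_{B_{2k}}^{(s(k−1))} equals sk. -/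
open MvPolynomial
open Fin.NatCast

/-!
A monomial `x^a` lies in the `m`-th power of an ideal generated by variables exactly when the
exponents of those variables add up to at least `m`. So `x^a ∈ I_{B_n}^{(m)}` says that each apex
exponent plus the weight of each arc is at least `m`. Every cycle vertex lies on `n - 2` of the
`n` arcs, so summing these `2n` inequalities gives `n m ≤ (n - 2) deg x^a` when `n ≥ 4`. For
`n = 2k` and `m = s(k - 1)` this is `deg x^a ≥ sk`, and `(x_2 x_4 ⋯ x_{2k})^s` attains the bound,
since any `2k - 2` consecutive cycle vertices contain exactly `k - 1` even ones.
-/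

namespace Function.Periodic

variable {M : Type*} [AddCommMonoid M] [IsRightCancelAdd M] {g : ℕ → M} {p : ℕ}

theorem sum_range_add (hg : Periodic g p) (c : ℕ) :
    ∑ t ∈ Finset.range p, g (c + t) = ∑ t ∈ Finset.range p, g t := by
  induction c with
  | zero => simp
  | succ c ih =>
    have hshift := (Finset.sum_range_succ' (fun t => g (c + t)) p).symm.trans
      (Finset.sum_range_succ (fun t => g (c + t)) p)
    rw [add_zero, hg c] at hshift
    simpa only [add_right_comm c 1, add_assoc, ← ih] using add_right_cancel hshift

theorem sum_range_mul_add (hg : Periodic g p) (N c : ℕ) :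
    ∑ t ∈ Finset.range (N * p), g (c + t) = N • ∑ t ∈ Finset.range p, g t := by
  induction N with
  | zero => simp
  | succ N ih =>
    rw [add_mul, one_mul, Finset.sum_range_add, ih, succ_nsmul]
    simp only [← add_assoc, hg.sum_range_add]

end Function.Periodic

namespace MvPolynomial

variable {σ R : Type*} [Fintype σ] [CommRing R] [IsDomain R]

theorem prod_X_pow_mem_span_X_image_pow_iff (a : σ → ℕ) (T : Finset σ) (m : ℕ) :
    ∏ i, X i ^ a i ∈ Ideal.span (X '' (T : Set σ) : Set (MvPolynomial σ R)) ^ m ↔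
      m ≤ ∑ i ∈ T, a i := by
  classical
  constructor
  · intro h
    let φ : MvPolynomial σ R →ₐ[R] Polynomial R := aeval fun i => if i ∈ T then .X else 1
    have hspan : (Ideal.span (X '' (T : Set σ))).map φ ≤ Ideal.span {Polynomial.X} := by
      rw [Ideal.map_span, Ideal.span_le]
      rintro _ ⟨_, ⟨i, hi, rfl⟩, rfl⟩
      simp [φ, Finset.mem_coe.mp hi]
    have hmap : φ (∏ i, X i ^ a i) = Polynomial.X ^ ∑ i ∈ T, a i := by
      simp [φ, Finset.prod_ite_mem, Finset.prod_pow_eq_pow_sum]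
    have hdvd := Ideal.pow_right_mono hspan m (Ideal.map_pow φ _ m ▸ Ideal.mem_map_of_mem φ h)
    rw [hmap, Ideal.span_singleton_pow, Ideal.mem_span_singleton] at hdvd
    exact (pow_dvd_pow_iff Polynomial.X_ne_zero Polynomial.not_isUnit_X).mp hdvd
  · intro h
    rw [← Finset.prod_mul_prod_compl T]
    refine Ideal.mul_mem_right _ _ (Ideal.pow_le_pow_right h ?_)
    rw [← Finset.prod_pow_eq_pow_sum]
    exact Ideal.prod_mem_prod fun i hi =>
      Ideal.pow_mem_pow (Ideal.subset_span (Set.mem_image_of_mem X hi)) _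

end MvPolynomial

def cycleVertex (n j : ℕ) : Fin (n + 2) := ((j % n + 1 : ℕ) : Fin (n + 2))

abbrev topVertex (n : ℕ) : Fin (n + 2) := ((n + 1 : ℕ) : Fin (n + 2))

section Cycle

variable {n : ℕ}

theorem val_cycleVertex (hn : 0 < n) (j : ℕ) : (cycleVertex n j : ℕ) = j % n + 1 :=
  Fin.val_cast_of_lt (by have := Nat.mod_lt j hn; omega)

theorem cycleVertex_periodic : Function.Periodic (cycleVertex n) n := by
  intro j
  simp [cycleVertex]

theorem cycleVertex_ne_zero (hn : 0 < n) (j : ℕ) : cycleVertex n j ≠ 0 := by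
  rw [ne_eq, Fin.ext_iff, val_cycleVertex hn]
  simp

theorem cycleVertex_ne_topVertex (hn : 0 < n) (j : ℕ) : cycleVertex n j ≠ topVertex n := by
  rw [ne_eq, Fin.ext_iff, val_cycleVertex hn, Fin.val_cast_of_lt (by omega)]
  have := Nat.mod_lt j hn
  omega

theorem arcT_eq_image (i : ℕ) :
    arcT n i = (Finset.range (n - 2)).image fun t => cycleVertex n (i + t) := rfl

theorem zero_notMem_arcT (hn : 0 < n) (i : ℕ) : 0 ∉ arcT n i := by
  simpa [arcT_eq_image] using fun t _ => cycleVertex_ne_zero hn (i + t)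

theorem topVertex_notMem_arcT (hn : 0 < n) (i : ℕ) : topVertex n ∉ arcT n i := by
  simpa [arcT_eq_image] using fun t _ => cycleVertex_ne_topVertex hn (i + t)

theorem sum_arcT (hn : 0 < n) (i : ℕ) (a : Fin (n + 2) → ℕ) :
    ∑ v ∈ arcT n i, a v = ∑ t ∈ Finset.range (n - 2), a (cycleVertex n (i + t)) := by
  refine Finset.sum_image fun t₁ h₁ t₂ h₂ h => ?_
  simp only [Finset.coe_range, Set.mem_Iio] at h₁ h₂
  change cycleVertex n (i + t₁) = cycleVertex n (i + t₂) at h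
  rw [Fin.ext_iff, val_cycleVertex hn, val_cycleVertex hn, Nat.add_right_cancel_iff] at h
  exact (Nat.ModEq.add_left_cancel' i h).eq_of_lt_of_lt (by omega) (by omega)

theorem sum_univ_eq_apexes_add_sum_cycle (a : Fin (n + 2) → ℕ) :
    ∑ v, a v = a 0 + a (topVertex n) + ∑ j ∈ Finset.range n, a (cycleVertex n j) := by
  have hcycle : ∀ j ∈ Finset.range n, cycleVertex n j = ((j + 1 : ℕ) : Fin (n + 2)) := by
    intro j hj
    rw [cycleVertex, Nat.mod_eq_of_lt (Finset.mem_range.mp hj)]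
  have hunfold := Fin.sum_univ_eq_sum_range (fun j : ℕ => a j) (n + 2)
  simp only [Fin.cast_val_eq_self] at hunfold
  rw [Finset.sum_congr rfl fun j hj => congrArg a (hcycle j hj), hunfold,
    Finset.sum_range_succ, Finset.sum_range_succ', Nat.cast_zero]
  ring

/-- Every cycle vertex lies on exactly `n - 2` of the `n` arcs. -/
theorem sum_range_sum_arcs (a : Fin (n + 2) → ℕ) :
    ∑ i ∈ Finset.range n, ∑ t ∈ Finset.range (n - 2), a (cycleVertex n (i + t)) =
      (n - 2) * ∑ j ∈ Finset.range n, a (cycleVertex n j) := by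
  rw [Finset.sum_comm, Finset.sum_congr rfl fun t _ => ?_, Finset.sum_const, Finset.card_range,
    smul_eq_mul]
  simpa only [add_comm _ t, Function.comp_apply] using
    (cycleVertex_periodic.comp a).sum_range_add t

end Cycle

section SymbolicPower

variable (K : Type*) [Field K] {n : ℕ}

theorem monom_mem_apexIdeal_pow_iff {m : ℕ} (a : Fin (n + 2) → ℕ) {v : Fin (n + 2)}
    {S : Finset (Fin (n + 2))} (hv : v ∉ S) :
    monom K n a ∈ apexIdeal K n v S ^ m ↔ m ≤ a v + ∑ w ∈ S, a w := by
  rw [apexIdeal, ← Set.image_insert_eq, ← Finset.coe_insert, monom,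
    MvPolynomial.prod_X_pow_mem_span_X_image_pow_iff, Finset.sum_insert hv]

theorem monom_mem_symbPow_iff (hn : 0 < n) (m : ℕ) (a : Fin (n + 2) → ℕ) :
    monom K n a ∈ symbPow K n m ↔ ∀ i < n,
      m ≤ a 0 + ∑ t ∈ Finset.range (n - 2), a (cycleVertex n (i + t)) ∧
      m ≤ a (topVertex n) + ∑ t ∈ Finset.range (n - 2), a (cycleVertex n (i + t)) := by
  simp only [symbPow, Submodule.mem_iInf, Submodule.mem_inf, Finset.mem_range,
    monom_mem_apexIdeal_pow_iff K a (zero_notMem_arcT hn _),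
    monom_mem_apexIdeal_pow_iff K a (topVertex_notMem_arcT hn _), sum_arcT hn]

/-- Averaging the defining inequalities over the `n` arcs. -/
theorem mul_le_sub_two_mul_sum_of_monom_mem_symbPow (hn : 4 ≤ n) {m : ℕ} {a : Fin (n + 2) → ℕ}
    (ha : monom K n a ∈ symbPow K n m) : n * m ≤ (n - 2) * ∑ v, a v := by
  rw [monom_mem_symbPow_iff K (by omega)] at ha
  rw [sum_univ_eq_apexes_add_sum_cycle]
  set C := ∑ j ∈ Finset.range n, a (cycleVertex n j)
  have hsum (b : ℕ)
      (hb : ∀ i < n, m ≤ b + ∑ t ∈ Finset.range (n - 2), a (cycleVertex n (i + t))) :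
      n * m ≤ n * b + (n - 2) * C := by
    have := Finset.card_nsmul_le_sum _ _ _ fun i hi => hb i (Finset.mem_range.mp hi)
    rwa [Finset.sum_add_distrib, sum_range_sum_arcs, Finset.sum_const, Finset.card_range,
      smul_eq_mul, smul_eq_mul] at this
  have h0 := hsum _ fun i hi => (ha i hi).1
  have htop := hsum _ fun i hi => (ha i hi).2
  obtain ⟨p, rfl⟩ : ∃ p, n = p + 4 := ⟨n - 4, by omega⟩
  simp only [show p + 4 - 2 = p + 2 by omega] at h0 htop ⊢
  nlinarith [Nat.zero_le (p * (a 0 + a (topVertex (p + 4))))]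

end SymbolicPower

theorem sum_range_mul_two_parity (N c s : ℕ) :
    ∑ t ∈ Finset.range (N * 2), (if (c + t) % 2 = 1 then s else 0) = N * s := by
  have hperiodic : Function.Periodic (fun j => if j % 2 = 1 then s else 0) 2 := by
    intro j
    simp only [Nat.add_mod_right]
  simp [hperiodic.sum_range_mul_add N c, Finset.sum_range_succ]

/-- The exponent vector of `(x_2 x_4 ⋯ x_n)^s`. -/
def evenWeight (n s : ℕ) (v : Fin (n + 2)) : ℕ :=
  if (v : ℕ) ≠ 0 ∧ (v : ℕ) % 2 = 0 then s else 0

section EvenWeight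

variable {k : ℕ} (s : ℕ)

theorem evenWeight_zero (n : ℕ) : evenWeight n s 0 = 0 := by
  simp [evenWeight]

theorem evenWeight_topVertex : evenWeight (2 * k) s (topVertex (2 * k)) = 0 := by
  rw [evenWeight, Fin.val_cast_of_lt (by omega), if_neg (by omega)]

theorem evenWeight_cycleVertex (hk : 0 < k) (j : ℕ) :
    evenWeight (2 * k) s (cycleVertex (2 * k) j) = if j % 2 = 1 then s else 0 := by
  have hparity : j % (2 * k) % 2 = j % 2 := Nat.mod_mod_of_dvd j (dvd_mul_right 2 k)
  rw [evenWeight, val_cycleVertex (by omega)]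
  split_ifs <;> omega

theorem sum_evenWeight (hk : 0 < k) : ∑ v, evenWeight (2 * k) s v = s * k := by
  simp only [sum_univ_eq_apexes_add_sum_cycle, evenWeight_zero, evenWeight_topVertex,
    evenWeight_cycleVertex s hk, zero_add]
  simpa [mul_comm 2 k, mul_comm s k] using sum_range_mul_two_parity k 0 s

theorem monom_evenWeight_mem_symbPow (K : Type*) [Field K] (hk : 0 < k) :
    monom K (2 * k) (evenWeight (2 * k) s) ∈ symbPow K (2 * k) (s * (k - 1)) := by
  rw [monom_mem_symbPow_iff K (by omega)]
  intro i _
  simp only [evenWeight_zero, evenWeight_topVertex, evenWeight_cycleVertex s hk,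
    show 2 * k - 2 = (k - 1) * 2 by omega, sum_range_mul_two_parity, mul_comm s, zero_add,
    le_refl, and_self]

end EvenWeight

theorem alpha_even_case_general (K : Type*) [Field K] (k s : ℕ) (hk : 2 ≤ k) :
    alphaSymb K (2 * k) (s * (k - 1)) = s * k := by
  have hwitness := monom_evenWeight_mem_symbPow s K (k := k) (by omega)
  have hdegree := sum_evenWeight s (k := k) (by omega)
  refine le_antisymm (Nat.sInf_le ⟨_, hdegree, hwitness⟩) (le_csInf ⟨_, _, hdegree, hwitness⟩ ?_)
  rintro _ ⟨a, rfl, ha⟩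
  have hbound := mul_le_sub_two_mul_sum_of_monom_mem_symbPow K (by omega) ha
  obtain ⟨j, rfl⟩ : ∃ j, k = j + 2 := ⟨k - 2, by omega⟩
  refine Nat.le_of_mul_le_mul_left (c := 2 * (j + 1)) ?_ (by omega)
  calc 2 * (j + 1) * (s * (j + 2)) = 2 * (j + 2) * (s * (j + 2 - 1)) := by
        rw [show j + 2 - 1 = j + 1 by omega]; ring
    _ ≤ (2 * (j + 2) - 2) * ∑ v, a v := hbound
    _ = 2 * (j + 1) * ∑ v, a v := by rw [show 2 * (j + 2) - 2 = 2 * (j + 1) by omega]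

/-- For `k ≥ 2`, `n = 2k` and every `s ≥ 1`: `α_{2k, s(k-1)} = sk`. -/
theorem alpha_even_case (K : Type*) [Field K] (k s : ℕ) (hk : 2 ≤ k) (hs : 1 ≤ s) :
    alphaSymb K (2 * k) (s * (k - 1)) = s * k :=
  alpha_even_case_general K k s hk
end

section
/- Let k ≥ 2 and n = 2k. No monomial of total degree strictly less than k belongs to I_{B_{2k}}^{(k−1)}. -/
open MvPolynomial
open Fin.NatCast

/-!
A monomial `x^a` lies in the `m`-th power of a monomial prime `⟨x_j : j ∈ U⟩` only if
`∑_{j ∈ U} a_j ≥ m`: specialise `x_j ↦ t` for `j ∈ U` and `x_j ↦ 1` otherwise. Hence a monomial of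
`I_{B_n}^{(m)}` puts exponent mass at least `m` on every set `{v} ∪ S`, `v` an apex and `S` an arc.
If its total degree is at most `m`, all of its mass lies on each of these sets. But every vertex
avoids one of them (an apex avoids the other apex's sets, a cycle vertex avoids the arc starting
just after it), so the monomial is `1`, which is not in the ideal once `m ≥ 1`.
-/

theorem MvPolynomial.le_sum_of_prod_X_pow_mem_span_X_pow {σ R : Type*} [Fintype σ] [CommRing R]
    [Nontrivial R] (U : Finset σ) (a : σ → ℕ) {m : ℕ}
    (h : ∏ i, X i ^ a i ∈ (Ideal.span (X '' (U : Set σ)) : Ideal (MvPolynomial σ R)) ^ m) :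
    m ≤ ∑ i ∈ U, a i := by
  classical
  let φ : MvPolynomial σ R →ₐ[R] Polynomial R :=
    aeval fun j => if j ∈ U then Polynomial.X else 1
  have hspan : (Ideal.span (X '' (U : Set σ))).map φ ≤ Ideal.span {Polynomial.X} := by
    rw [Ideal.map_span, Ideal.span_le]
    rintro _ ⟨_, ⟨j, hj, rfl⟩, rfl⟩
    simp [φ, Finset.mem_coe.mp hj]
  have hprod : φ (∏ i, X i ^ a i) = Polynomial.X ^ ∑ i ∈ U, a i := by
    simp only [map_prod, map_pow, φ, aeval_X, ite_pow, one_pow, Finset.prod_ite_mem,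
      Finset.univ_inter, Finset.prod_pow_eq_pow_sum]
  have hmem := Ideal.pow_right_mono hspan m (Ideal.map_pow φ _ m ▸ Ideal.mem_map_of_mem φ h)
  rw [hprod, Ideal.span_singleton_pow, Ideal.mem_span_singleton] at hmem
  by_contra! hlt
  simpa using Polynomial.X_pow_dvd_iff.mp hmem _ hlt

theorem Nat.add_mod_ne_self {n j s : ℕ} (hj : j < n) (hs₀ : 0 < s) (hs : s < n) :
    (j + s) % n ≠ j := by
  intro h
  have hs_zero : s ≡ 0 [MOD n] :=
    Nat.ModEq.add_left_cancel' j (by rw [Nat.ModEq, h, add_zero, Nat.mod_eq_of_lt hj])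
  have := Nat.le_of_dvd hs₀ (Nat.modEq_zero_iff_dvd.mp hs_zero)
  omega

def apices (n : ℕ) : Finset (Fin (n + 2)) :=
  {0, ((n + 1 : ℕ) : Fin (n + 2))}

section Arcs

variable {n : ℕ}

theorem exists_val_of_mem_arcT {i : ℕ} {y : Fin (n + 2)} (hn : 0 < n) (hy : y ∈ arcT n i) :
    ∃ t < n - 2, (y : ℕ) = (i + t) % n + 1 := by
  obtain ⟨t, ht, rfl⟩ := Finset.mem_image.mp hy
  refine ⟨t, Finset.mem_range.mp ht, Fin.val_cast_of_lt ?_⟩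
  have := Nat.mod_lt (i + t) hn
  omega

theorem val_mem_Icc_of_mem_arcT_s12 {i : ℕ} {y : Fin (n + 2)} (hn : 0 < n) (hy : y ∈ arcT n i) :
    (y : ℕ) ∈ Finset.Icc 1 n := by
  obtain ⟨t, -, hval⟩ := exists_val_of_mem_arcT hn hy
  have := Nat.mod_lt (i + t) hn
  rw [Finset.mem_Icc]
  omega

theorem not_mem_arcT_succ {j : ℕ} {x : Fin (n + 2)} (hx : (x : ℕ) = j + 1) (hj : j < n) :
    x ∉ arcT n ((j + 1) % n) := by
  intro hmem
  obtain ⟨t, ht, hval⟩ := exists_val_of_mem_arcT (by omega) hmem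
  rw [Nat.mod_add_mod, add_assoc] at hval
  exact Nat.add_mod_ne_self (s := 1 + t) hj (by omega) (by omega) (by omega)

theorem exists_apex_arc_not_mem (hn : 0 < n) (x : Fin (n + 2)) :
    ∃ i < n, ∃ v ∈ apices n, x ∉ insert v (arcT n i) := by
  have htop : (((n + 1 : ℕ) : Fin (n + 2)) : ℕ) = n + 1 := Fin.val_cast_of_lt (by omega)
  have hcycle := fun h => Finset.mem_Icc.mp (val_mem_Icc_of_mem_arcT_s12 (i := 0) (y := x) hn h)
  simp only [apices, Finset.mem_insert, Finset.mem_singleton, exists_eq_or_imp, exists_eq_left,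
    not_or]
  rcases Nat.lt_or_ge (x : ℕ) 1 with hx_zero | hx_pos
  · exact ⟨0, hn, .inr ⟨Fin.ne_of_val_ne (by omega), fun h => by have := hcycle h; omega⟩⟩
  rcases Nat.lt_or_ge (x : ℕ) (n + 1) with hx_cycle | hx_top
  · obtain ⟨j, hj⟩ := Nat.exists_eq_add_of_le' hx_pos
    exact ⟨(j + 1) % n, Nat.mod_lt _ hn,
      .inl ⟨Fin.ne_of_val_ne (by rw [Fin.val_zero]; omega), not_mem_arcT_succ hj (by omega)⟩⟩
  · exact ⟨0, hn, .inl ⟨Fin.ne_of_val_ne (by rw [Fin.val_zero]; omega),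
      fun h => by have := hcycle h; omega⟩⟩

end Arcs

section SymbolicPower

variable (K : Type*) [Field K] {n m : ℕ} {a : Fin (n + 2) → ℕ}

theorem le_sum_of_monom_mem_apexIdeal_pow {v : Fin (n + 2)} {S : Finset (Fin (n + 2))}
    (h : monom K n a ∈ apexIdeal K n v S ^ m) : m ≤ ∑ j ∈ insert v S, a j := by
  classical
  refine MvPolynomial.le_sum_of_prod_X_pow_mem_span_X_pow (R := K) _ a ?_
  rwa [Finset.coe_insert, Set.image_insert_eq]

theorem le_sum_of_monom_mem_symbPow (h : monom K n a ∈ symbPow K n m) {i : ℕ} (hi : i < n)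
    {v : Fin (n + 2)} (hv : v ∈ apices n) : m ≤ ∑ j ∈ insert v (arcT n i), a j := by
  have hi := Submodule.mem_inf.mp <|
    Ideal.mem_iInf.mp (Ideal.mem_iInf.mp h i) (Finset.mem_range.mpr hi)
  simp only [apices, Finset.mem_insert, Finset.mem_singleton] at hv
  rcases hv with rfl | rfl
  · exact le_sum_of_monom_mem_apexIdeal_pow K hi.1
  · exact le_sum_of_monom_mem_apexIdeal_pow K hi.2

theorem monom_not_mem_symbPow (hn : 0 < n) (hm : 0 < m) (hdeg : ∑ i, a i ≤ m) :
    monom K n a ∉ symbPow K n m := by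
  intro h
  have hzero : ∀ x, a x = 0 := by
    intro x
    by_contra hx
    obtain ⟨i, hi, v, hv, hxS⟩ := exists_apex_arc_not_mem hn x
    have := Finset.sum_lt_sum_of_subset (Finset.subset_univ _) (Finset.mem_univ x) hxS
      (Nat.pos_of_ne_zero hx) fun _ _ _ => Nat.zero_le _
    have := le_sum_of_monom_mem_symbPow K h hi hv
    omega
  have := le_sum_of_monom_mem_symbPow K h hn (v := 0) (by simp [apices])
  simp only [hzero, Finset.sum_const_zero] at this
  omega

end SymbolicPower

/-- For `k ≥ 2` and `n = 2k`, no monomial of total degree strictly less than `k`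
belongs to `I_{B_{2k}}^{(k-1)}`. -/
theorem no_low_degree_monomial_even (K : Type*) [Field K] (k : ℕ) (hk : 2 ≤ k)
    (a : Fin (2 * k + 2) → ℕ) (hdeg : (∑ i, a i) < k) :
    monom K (2 * k) a ∉ symbPow K (2 * k) (k - 1) :=
  monom_not_mem_symbPow K (by omega) (by omega) (by omega)
end
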